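/- For every n ≥ 1, the square matrix (φ_λ(c_μ))_{λ,μ ∈ DP(n)} over ℚ is invertible; moreover φ_λ(c_λ) > 0 for every λ ∈ DP(n), and φ_λ(c_μ) = 0 unless W_{μ̂} is contained in some W_n-conjugate of W_{λ̂} (so the matrix is triangular with nonzero diagonal with respect to any linear order refining this containment order). -/

import Mathlib

/- Common definitions: the Coxeter group of type Bₙ realized as signed permutations,
   signed compositions, the reflection subgroups `W_A`, double partitions, marks,
   permutation characters, and the action on `ℝⁿ`. -/

attribute [local instance] Classical.propDecidable

namespace GBA

/-- The ambient group of permutations of `ℤ`. -/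
abbrev Q : Type := Equiv.Perm ℤ

/-- The generator `t_k`, swapping `k` and `-k`. -/
def tP (k : ℕ) : Q := Equiv.swap (k : ℤ) (-(k : ℤ))

/-- The generator `s_k`, swapping `k ↔ k+1` and `-k ↔ -(k+1)`. -/
def sP (k : ℕ) : Q := Equiv.swap (k : ℤ) ((k : ℤ) + 1) * Equiv.swap (-(k : ℤ)) (-((k : ℤ) + 1))

/-- The Coxeter group `Wₙ` of type `Bₙ`, realized as the group of permutations `w`
of `{-n, …, -1, 1, …, n}` (fixing everything else) with `w (-i) = - w i` for all `i`. -/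
def W (n : ℕ) : Subgroup Q where
  carrier := {w | (∀ i : ℤ, w (-i) = -(w i)) ∧ (∀ i : ℤ, (n : ℤ) < |i| → w i = i)}
  one_mem' := by refine ⟨fun i => ?_, fun i _ => ?_⟩ <;> simp
  mul_mem' := by
    rintro a b ⟨ha1, ha2⟩ ⟨hb1, hb2⟩
    refine ⟨fun i => ?_, fun i hi => ?_⟩
    · simp only [Equiv.Perm.mul_apply, hb1, ha1]
    · simp only [Equiv.Perm.mul_apply, hb2 i hi, ha2 i hi]
  inv_mem' := by
    rintro a ⟨ha1, ha2⟩
    refine ⟨fun i => a.injective ?_, fun i hi => a.injective ?_⟩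
    · rw [Equiv.Perm.coe_inv, Equiv.apply_symm_apply, ha1, Equiv.apply_symm_apply]
    · rw [Equiv.Perm.coe_inv, Equiv.apply_symm_apply, ha2 i hi]

/-- A signed composition of `n`: a list of nonzero integers whose absolute values sum to `n`. -/
def SC (n : ℕ) : Type := {A : List ℤ // (∀ a ∈ A, a ≠ 0) ∧ (A.map Int.natAbs).sum = n}

/-- The list of Coxeter generators attached to a signed composition (with an offset):
for each part `a` occupying positions `off+1, …, off+|a|`, the generators
`s_p` for `off+1 ≤ p ≤ off+|a|-1`, together with `t_{off+1}` if `a > 0`. -/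
def genList : ℕ → List ℤ → List Q
  | _, [] => []
  | off, a :: rest =>
      ((List.range (a.natAbs - 1)).map fun p => sP (off + p + 1))
        ++ (if 0 < a then [tP (off + 1)] else [])
        ++ genList (off + a.natAbs) rest

/-- The generating set `S_A` of the reflection subgroup `W_A`. -/
def SA {n : ℕ} (A : SC n) : Set Q := {x | x ∈ genList 0 A.1}

/-- The reflection subgroup `W_A` attached to a signed composition `A` of `n`. -/
def WA {n : ℕ} (A : SC n) : Subgroup Q := Subgroup.closure (SA A)

/-- The canonical Coxeter element `c_A` of `(W_A, S_A)`: the product of the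
generators in `S_A`, each occurring exactly once. -/
def cox {n : ℕ} (A : SC n) : Q := (genList 0 A.1).prod

/-- `c` is a Coxeter element of `(W_A, S_A)`: a product of all elements of `S_A`,
each occurring exactly once, in some order. -/
def IsCox {n : ℕ} (A : SC n) (c : Q) : Prop :=
  ∃ L : List Q, L.Perm (genList 0 A.1) ∧ L.prod = c

/-- The generating set `Sₙ = {t, s₁, …, s_{n-1}}` of `Wₙ`. -/
def SFull (n : ℕ) : Set Q := {x | x ∈ genList 0 [(n : ℤ)]}

/-- The length of `w` with respect to a generating set `S` (the minimal length
of an expression of `w` as a product of elements of `S`). -/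
noncomputable def lenS (S : Set Q) (w : Q) : ℕ :=
  sInf {k | ∃ L : List Q, (∀ x ∈ L, x ∈ S) ∧ L.length = k ∧ L.prod = w}

/-- The length function of `(Wₙ, Sₙ)`. -/
noncomputable def len (n : ℕ) : Q → ℕ := lenS (SFull n)

/-- A double partition of `n`: a pair `(λ⁺, λ⁻)` of partitions with `|λ⁺| + |λ⁻| = n`,
encoded by `|λ⁺| = k`. -/
def DP (n : ℕ) : Type := Σ k : Fin (n + 1), Nat.Partition k.1 × Nat.Partition (n - k.1)

noncomputable instance (n : ℕ) : Fintype (DP n) := by unfold DP; infer_instance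
noncomputable instance (n : ℕ) : DecidableEq (DP n) := by unfold DP; infer_instance

private lemma filter_sum_aux (L : List ℤ) (hL : ∀ a ∈ L, a ≠ 0) :
    ((L.filter (fun a => 0 < a)).map Int.natAbs).sum
      + ((L.filter (fun a => a < 0)).map Int.natAbs).sum = (L.map Int.natAbs).sum := by
  induction L with
  | nil => simp
  | cons a L ih =>
    have ha := hL a (by simp)
    have ih' := ih (fun x hx => hL x (by simp [hx]))
    by_cases h : 0 < a
    · simp only [List.filter_cons]
      rw [if_pos (by simpa using h), if_neg (by simpa using (by omega : ¬ a < 0))]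
      simp only [List.map_cons, List.sum_cons]
      omega
    · have h' : a < 0 := by omega
      simp only [List.filter_cons]
      rw [if_neg (by simpa using h), if_pos (by simpa using h')]
      simp only [List.map_cons, List.sum_cons]
      omega

/-- `λ̂ := λ⁺ ⊔ λ⁻`, the signed composition of `n` whose positive parts are the
parts of `λ⁺` and whose negative parts are the negatives of the parts of `λ⁻`. -/
noncomputable def hat {n : ℕ} (l : DP n) : SC n :=
  ⟨l.2.1.parts.toList.map (fun a : ℕ => (a : ℤ)) ++
      l.2.2.parts.toList.map (fun a : ℕ => -(a : ℤ)),
    by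
    constructor
    · intro a ha
      rw [List.mem_append] at ha
      rcases ha with h | h <;> obtain ⟨b, hb, rfl⟩ := List.exists_of_mem_map h
      · have := l.2.1.parts_pos (Multiset.mem_toList.1 hb); omega
      · have := l.2.2.parts_pos (Multiset.mem_toList.1 hb); omega
    · have hk : (l.1 : ℕ) ≤ n := Nat.lt_succ_iff.1 l.1.2
      have h1 := l.2.1.parts_sum
      have h2 := l.2.2.parts_sum
      rw [List.map_append, List.sum_append, List.map_map, List.map_map]
      simp only [Function.comp_def, Int.natAbs_neg, Int.natAbs_natCast]
      simp only [List.map_id']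
      rw [Multiset.sum_toList, Multiset.sum_toList, h1, h2]
      omega⟩

/-- `λ(A) ∈ DP(n)`: the double partition obtained by collecting the positive parts
and the (absolute values of the) negative parts of `A`. -/
noncomputable def lamOf {n : ℕ} (A : SC n) : DP n :=
  ⟨⟨((A.1.filter (fun a => 0 < a)).map Int.natAbs).sum, by
      have := filter_sum_aux A.1 A.2.1
      rw [A.2.2] at this
      omega⟩,
    ⟨(((A.1.filter (fun a => 0 < a)).map Int.natAbs : List ℕ) : Multiset ℕ),
      fun {i} hi => by
        obtain ⟨b, hb, rfl⟩ := List.exists_of_mem_map (by exact_mod_cast hi)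
        have := A.2.1 b (List.mem_of_mem_filter hb)
        omega,
      by simp⟩,
    ⟨(((A.1.filter (fun a => a < 0)).map Int.natAbs : List ℕ) : Multiset ℕ),
      fun {i} hi => by
        obtain ⟨b, hb, rfl⟩ := List.exists_of_mem_map (by exact_mod_cast hi)
        have := A.2.1 b (List.mem_of_mem_filter hb)
        omega,
      by
        have := filter_sum_aux A.1 A.2.1
        rw [A.2.2] at this
        simp only [Multiset.sum_coe]
        omega⟩⟩

/-- The permutation character `Ind_{W_A}^{Wₙ} 1`: its value at `w ∈ Wₙ` is the number
of cosets `x W_A` in `Wₙ/W_A` fixed by `w`, i.e. with `x⁻¹ w x ∈ W_A`. -/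
noncomputable def phi (n : ℕ) (A : SC n) (w : Q) : ℚ :=
  Nat.card {q : W n ⧸ (WA A).subgroupOf (W n) //
    ∃ x : W n, (QuotientGroup.mk x : W n ⧸ (WA A).subgroupOf (W n)) = q ∧
      (x : Q)⁻¹ * w * x ∈ WA A}

/-- The matrix `(φ_λ(c_μ))_{λ,μ ∈ DP(n)}`. -/
noncomputable def phiMat (n : ℕ) : Matrix (DP n) (DP n) ℚ :=
  fun lam mu => phi n (hat lam) (cox (hat mu))

/-- The matrix `(u_{λμ})`, the inverse of `(φ_λ(c_μ))`. -/
noncomputable def uMat (n : ℕ) : Matrix (DP n) (DP n) ℚ := (phiMat n)⁻¹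

/-- The conjugacy class `C(λ)` of `Wₙ` containing the Coxeter elements `c_A`
for `λ(A) = λ`, as a subset of the ambient permutation group. -/
def CC (n : ℕ) (lam : DP n) : Set Q :=
  {w | ∃ g ∈ W n, g * cox (hat lam) * g⁻¹ = w}

/-- The set `D_A` of distinguished (minimal length) coset representatives of `W_A` in `Wₙ`. -/
noncomputable def DA {n : ℕ} (A : SC n) : Set Q :=
  {x | x ∈ W n ∧ ∀ s ∈ SA A, len n x < len n (x * s)}

/-- `D_{AB} = D_A⁻¹ ∩ D_B`. -/
noncomputable def DAB {n : ℕ} (A B : SC n) : Set Q := {x | x⁻¹ ∈ DA A ∧ x ∈ DA B}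

/-- The mark `μ_{CA}` of `W_A` on `Wₙ/W_C`: the number of cosets `x W_C` with
`x⁻¹ W_A x ⊆ W_C`. -/
noncomputable def mark (n : ℕ) (C A : SC n) : ℕ :=
  Nat.card {q : W n ⧸ (WA C).subgroupOf (W n) //
    ∃ x : W n, (QuotientGroup.mk x : W n ⧸ (WA C).subgroupOf (W n)) = q ∧
      ∀ y ∈ WA A, (x : Q)⁻¹ * y * (x : Q) ∈ WA C}

/-- `𝒲(B) = D_{BB}^⊆ = {x ∈ D_{BB} : x⁻¹ W_B x ⊆ W_B}`, a complement of
`W_B` in its normalizer `N_{Wₙ}(W_B)`. -/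
noncomputable def Wcal {n : ℕ} (B : SC n) : Set Q :=
  {x | x ∈ DAB B B ∧ ∀ y ∈ WA B, x⁻¹ * y * x ∈ WA B}

/-- The induction to `Wₙ` of a class function `f` on a subgroup `H ⊆ Wₙ`
(`f` is extended by zero outside `H`):
`(Ind_H^{Wₙ} f)(w) = |H|⁻¹ Σ_{x ∈ Wₙ, x⁻¹wx ∈ H} f(x⁻¹wx)`. -/
noncomputable def ind (n : ℕ) (H : Subgroup Q) (f : Q → ℚ) (w : Q) : ℚ :=
  (∑ᶠ x ∈ (W n : Set Q), if x⁻¹ * w * x ∈ H then f (x⁻¹ * w * x) else 0) / (Nat.card H)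

/-- The action of a signed permutation on `ℝⁿ` (coordinates indexed `1, …, n`):
`w` sends `e_i` to `sgn(w(i)) e_{|w(i)|}`, so `(w · v)_j = sgn(w⁻¹(j)) v_{|w⁻¹(j)|}`. -/
noncomputable def act (n : ℕ) (w : Q) (v : Fin n → ℝ) : Fin n → ℝ := fun j =>
  (if 0 < w⁻¹ ((j : ℕ) + 1 : ℤ) then (1 : ℝ) else -1) *
    (if h : (w⁻¹ ((j : ℕ) + 1 : ℤ)).natAbs - 1 < n then v ⟨(w⁻¹ ((j : ℕ) + 1 : ℤ)).natAbs - 1, h⟩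
     else 0)

/-- `Fix(X) = {v ∈ ℝⁿ : x(v) = v for all x ∈ X}`. -/
noncomputable def FixSet (n : ℕ) (X : Set Q) : Set (Fin n → ℝ) :=
  {v | ∀ x ∈ X, act n x v = v}

/-- The parabolic closure `A(X)`: the pointwise stabilizer in `Wₙ` of `Fix(X)`. -/
noncomputable def pClosure (n : ℕ) (X : Set Q) : Set Q :=
  {w | w ∈ W n ∧ ∀ v ∈ FixSet n X, act n w v = v}

/-- The longest element `wₙ` of `Wₙ`, the signed permutation `i ↦ -i`
(acting as `-id` on `ℝⁿ`). -/
def wLong (n : ℕ) : Q :=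
  Function.Involutive.toPerm (fun i => if |i| ≤ (n : ℤ) then -i else i)
    (by intro i; by_cases h : |i| ≤ (n : ℤ) <;> simp [h, abs_neg])

/-- The double partition `((n), ∅)`. -/
noncomputable def topDP (n : ℕ) : DP n :=
  ⟨⟨n, Nat.lt_succ_self n⟩, Nat.Partition.indiscrete n,
    ⟨0, by simp, by simp⟩⟩

/-- The double partition `(∅, (1ⁿ)) = λ((-1, …, -1))`. -/
noncomputable def botDP (n : ℕ) : DP n :=
  ⟨⟨0, Nat.succ_pos n⟩, ⟨0, by simp, by simp⟩,
    ⟨Multiset.replicate n 1,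
      fun {i} hi => by rw [Multiset.eq_of_mem_replicate hi]; norm_num,
      by simp [Multiset.sum_replicate]⟩⟩

/-!
`φ_λ(c_μ)` counts the cosets `x W_{λ̂}` with `x⁻¹ c_μ x ∈ W_{λ̂}`. Every such `x` conjugates all
of `W_{μ̂}` into `W_{λ̂}`. Indeed `W_{λ̂}` preserves each of its cells (for a part `a > 0` the block
`±{o+1, …, o+a}`, for a part `a < 0` the two halves `{o+1, …, o+|a|}` and its negative), and
contains the reflection exchanging any two points of one cell; on the other hand the orbits of
`c_μ` are exactly the cells of `μ̂`, so they join any two points exchanged by a generator of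
`W_{μ̂}`. Hence `φ_λ(c_μ) ≠ 0` only if `W_{μ̂}` is conjugate into `W_{λ̂}`, while `φ_λ(c_λ) > 0`
because of the trivial coset.

Containment up to conjugacy is a partial order on `DP(n)`: if each of `W_{λ̂}`, `W_{μ̂}` is
conjugate into the other, finiteness makes them conjugate, and then the number of points whose
cell has a given size and a given behaviour under `z ↦ -z` is the same for both; these numbers
determine `λ`. A linear extension of this order makes the matrix triangular with nonzero
diagonal.
-/

end GBA

lemma Subgroup.mem_iff_conj_mem_of_conj_le {G : Type*} [Group G] {H K : Subgroup G}
    [Finite H] [Finite K] {x y : G} (hx : ∀ h ∈ H, x⁻¹ * h * x ∈ K)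
    (hy : ∀ k ∈ K, y⁻¹ * k * y ∈ H) (g : G) :
    g ∈ H ↔ x⁻¹ * g * x ∈ K := by
  have hcard : ∀ (z : G) (L : Subgroup G),
      Nat.card (L.map (MulAut.conj z⁻¹).toMonoidHom) = Nat.card L := fun z L =>
    (Nat.card_congr (L.equivMapOfInjective _ (MulAut.conj z⁻¹).injective).toEquiv).symm
  have hxK : H.map (MulAut.conj x⁻¹).toMonoidHom ≤ K := by
    rintro _ ⟨h, hh, rfl⟩
    simpa using hx h hh
  have hyH : K.map (MulAut.conj y⁻¹).toMonoidHom ≤ H := by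
    rintro _ ⟨k, hk, rfl⟩
    simpa using hy k hk
  have heq : H.map (MulAut.conj x⁻¹).toMonoidHom = K := Subgroup.eq_of_le_of_card_ge hxK
    (by rw [hcard, ← hcard y K]; exact Subgroup.card_le_of_le hyH)
  rw [← heq, Subgroup.mem_map_equiv]
  simp [mul_assoc]

theorem Matrix.isUnit_of_isPartialOrder {ι R : Type*} [Fintype ι] [DecidableEq ι] [CommRing R]
    (M : Matrix ι ι R) (r : ι → ι → Prop) [IsPartialOrder ι r]
    (hM : ∀ i j, M i j ≠ 0 → r j i) (hdiag : ∀ i, IsUnit (M i i)) : IsUnit M := by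
  obtain ⟨s, hs, hrs⟩ := extend_partialOrder r
  let _ : LinearOrder ι :=
    { le := s
      le_refl := hs.refl
      le_trans := fun _ _ _ => hs.trans _ _ _
      le_antisymm := fun _ _ => hs.antisymm _ _
      le_total := hs.total
      toDecidableLE := Classical.decRel _ }
  have hlow : M.IsLowerTriangular := fun i j (hij : i < j) => by
    by_contra h
    exact hij.not_ge (hrs _ _ (hM i j h))
  rw [Matrix.isUnit_iff_isUnit_det, Matrix.det_of_isLowerTriangular M hlow]
  exact IsUnit.prod_univ_iff.2 hdiag

namespace GBA

open Finset

section SignedPerm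

lemma odd_inv {x : Q} (hx : Function.Odd x) : Function.Odd ⇑x⁻¹ := fun z => x.injective <| by
  rw [hx]
  simp only [Equiv.Perm.coe_inv, Equiv.apply_symm_apply]

lemma odd_apply_zero {x : Q} (hx : Function.Odd x) : x 0 = 0 := by
  have := hx 0
  rw [neg_zero] at this
  omega

lemma odd_apply_ne_zero {x : Q} (hx : Function.Odd x) {z : ℤ} (hz : z ≠ 0) : x z ≠ 0 :=
  fun h => hz (x.injective (h.trans (odd_apply_zero hx).symm))

lemma odd_natAbs_apply_eq_iff {x : Q} (hx : Function.Odd x) {u v : ℤ} :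
    (x u).natAbs = (x v).natAbs ↔ u.natAbs = v.natAbs := by
  rw [Int.natAbs_eq_natAbs_iff, Int.natAbs_eq_natAbs_iff, ← hx, x.injective.eq_iff,
    x.injective.eq_iff]

def signedSwap (u v : ℤ) : Q := Equiv.swap u v * Equiv.swap (-u) (-v)

lemma signedSwap_apply {u v : ℤ} (hu : u ≠ 0) (hv : v ≠ 0) (huv : u.natAbs ≠ v.natAbs) (z : ℤ) :
    signedSwap u v z = if z = u then v else if z = v then u
      else if z = -u then -v else if z = -v then -u else z := by
  simp only [signedSwap, Equiv.Perm.mul_apply, Equiv.swap_apply_def]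
  split_ifs <;> omega

lemma signedSwap_comm (u v : ℤ) : signedSwap u v = signedSwap v u := by
  rw [signedSwap, signedSwap, Equiv.swap_comm, Equiv.swap_comm (-u)]

lemma signedSwap_neg_neg {u v : ℤ} (hu : u ≠ 0) (hv : v ≠ 0) (huv : u.natAbs ≠ v.natAbs) :
    signedSwap (-u) (-v) = signedSwap u v := by
  ext z
  rw [signedSwap_apply (by omega) (by omega) (by omega), signedSwap_apply hu hv huv]
  split_ifs <;> omega

lemma conj_signedSwap {x : Q} (hx : Function.Odd x) (u v : ℤ) :
    x * signedSwap u v * x⁻¹ = signedSwap (x u) (x v) := by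
  rw [signedSwap, signedSwap, ← hx, ← hx, Equiv.swap_apply_apply, Equiv.swap_apply_apply]
  group

lemma conj_swap_neg {x : Q} (hx : Function.Odd x) (u : ℤ) :
    x * Equiv.swap u (-u) * x⁻¹ = Equiv.swap (x u) (-x u) := by
  rw [← hx, Equiv.swap_apply_apply]

lemma sP_eq_signedSwap (k : ℕ) : sP k = signedSwap k (k + 1) := by
  rw [sP, signedSwap, neg_add']

lemma odd_signedSwap {u v : ℤ} (hu : u ≠ 0) (hv : v ≠ 0) (huv : u.natAbs ≠ v.natAbs) :
    Function.Odd (signedSwap u v) := fun z => by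
  rw [signedSwap_apply hu hv huv, signedSwap_apply hu hv huv]
  split_ifs <;> omega

lemma odd_swap_neg (u : ℤ) : Function.Odd (Equiv.swap u (-u)) := fun z => by
  simp only [Equiv.swap_apply_def]
  split_ifs <;> omega

lemma odd_sP {k : ℕ} (hk : 1 ≤ k) : Function.Odd (sP k) := by
  rw [sP_eq_signedSwap]
  exact odd_signedSwap (by omega) (by omega) (by omega)

end SignedPerm

section WeylGroup

variable {n : ℕ} {w : Q}

lemma odd_of_mem_W (hw : w ∈ W n) : Function.Odd w := hw.1

lemma apply_eq_self_of_mem_W (hw : w ∈ W n) {z : ℤ} (hz : n < z.natAbs) : w z = z :=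
  hw.2 z (by rw [Int.abs_eq_natAbs]; omega)

lemma natAbs_apply_le_of_mem_W (hw : w ∈ W n) {z : ℤ} (hz : z.natAbs ≤ n) :
    (w z).natAbs ≤ n := by
  by_contra h
  have := w.injective (apply_eq_self_of_mem_W hw (z := w z) (by omega))
  omega

instance (n : ℕ) : Finite (W n) := by
  let f : W n → {z : ℤ // z.natAbs ≤ n} → {z : ℤ // z.natAbs ≤ n} :=
    fun w z => ⟨w.1 z.1, natAbs_apply_le_of_mem_W w.2 z.2⟩
  have : Finite {z : ℤ // z.natAbs ≤ n} :=
    (Set.finite_Icc (-(n : ℤ)) n).subset (fun z (hz : z.natAbs ≤ n) => by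
      simp only [Set.mem_Icc]; omega) |>.to_subtype
  refine Finite.of_injective f fun w₁ w₂ h => Subtype.ext <| Equiv.ext fun z => ?_
  by_cases hz : z.natAbs ≤ n
  · exact congrArg Subtype.val (congrFun h ⟨z, hz⟩)
  · rw [apply_eq_self_of_mem_W w₁.2 (by omega), apply_eq_self_of_mem_W w₂.2 (by omega)]

end WeylGroup

section Blocks

def sumAbs (L : List ℤ) : ℕ := (L.map Int.natAbs).sum

@[simp] lemma sumAbs_nil : sumAbs [] = 0 := rfl

@[simp] lemma sumAbs_cons (a : ℤ) (L : List ℤ) : sumAbs (a :: L) = a.natAbs + sumAbs L := by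
  simp [sumAbs]

@[simp] lemma sumAbs_append (L M : List ℤ) : sumAbs (L ++ M) = sumAbs L + sumAbs M := by
  simp [sumAbs]

lemma genList_append (off : ℕ) (M N : List ℤ) :
    genList off (M ++ N) = genList off M ++ genList (off + sumAbs M) N := by
  induction M generalizing off with
  | nil => simp [genList]
  | cons a M ih =>
    simp only [List.cons_append, genList, ih, sumAbs_cons, List.append_assoc, Nat.add_assoc]

def IsBlockGen (o : ℕ) (a : ℤ) (x : Q) : Prop :=
  (∃ j, 1 ≤ j ∧ j < a.natAbs ∧ x = sP (o + j)) ∨ (0 < a ∧ x = tP (o + 1))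

lemma mem_genList_singleton {o : ℕ} {a : ℤ} {x : Q} : x ∈ genList o [a] ↔ IsBlockGen o a x := by
  simp only [genList, List.append_nil, List.mem_append, List.mem_map, List.mem_range,
    IsBlockGen]
  refine or_congr ⟨fun ⟨p, hp, h⟩ => ⟨p + 1, by omega, by omega, by rw [← h]; rfl⟩,
    fun ⟨j, hj, hja, h⟩ => ⟨j - 1, by omega, by rw [h]; congr 1; omega⟩⟩ ?_
  split_ifs with ha <;> simp [ha]

lemma mem_genList_iff {off : ℕ} {L : List ℤ} {x : Q} :
    x ∈ genList off L ↔ ∃ pre a suf, L = pre ++ a :: suf ∧ IsBlockGen (off + sumAbs pre) a x := by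
  induction L generalizing off with
  | nil => simp [genList]
  | cons b L ih =>
    rw [← List.singleton_append, genList_append, List.mem_append, mem_genList_singleton, ih]
    constructor
    · rintro (h | ⟨pre, a, suf, rfl, h⟩)
      · exact ⟨[], b, L, rfl, by simpa using h⟩
      · exact ⟨b :: pre, a, suf, rfl, by simpa [Nat.add_assoc] using h⟩
    · rintro ⟨pre, a, suf, hL, h⟩
      rcases pre with _ | ⟨c, pre⟩
      · obtain ⟨rfl, -⟩ := List.cons_eq_cons.1 hL
        exact Or.inl (by simpa using h)
      · obtain ⟨rfl, rfl⟩ := List.cons_eq_cons.1 hL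
        exact Or.inr ⟨pre, a, suf, by simp, by simpa [Nat.add_assoc] using h⟩

/-- For `off < |z| ≤ off + sumAbs L`: the block `(o, a)` of `L` containing `|z|`, together with
the sign of `z` when `a < 0`. Two such points have the same cell iff they lie in the same orbit
of the group generated by `genList off L`. -/
def cell : List ℤ → ℕ → ℤ → Option (ℕ × ℤ × Bool)
  | [], _, _ => none
  | a :: L, off, z =>
      if z.natAbs ≤ off + a.natAbs then some (off, a, decide (a < 0 ∧ 0 < z))
      else cell L (off + a.natAbs) z

lemma cell_of_mem_block {L pre suf : List ℤ} {a : ℤ} {off : ℕ} {z : ℤ}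
    (hL : L = pre ++ a :: suf) (h₁ : off + sumAbs pre < z.natAbs)
    (h₂ : z.natAbs ≤ off + sumAbs pre + a.natAbs) :
    cell L off z = some (off + sumAbs pre, a, decide (a < 0 ∧ 0 < z)) := by
  subst hL
  induction pre generalizing off with
  | nil => simp only [List.nil_append, cell, sumAbs_nil, Nat.add_zero] at *; rw [if_pos h₂]
  | cons b pre ih =>
    simp only [List.cons_append, cell, sumAbs_cons] at *
    rw [if_neg (by omega), ih (by omega) (by omega), Nat.add_assoc]

lemma exists_mem_block {L : List ℤ} {off : ℕ} {z : ℤ} (h₁ : off < z.natAbs)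
    (h₂ : z.natAbs ≤ off + sumAbs L) : ∃ pre a suf, L = pre ++ a :: suf ∧
      off + sumAbs pre < z.natAbs ∧ z.natAbs ≤ off + sumAbs pre + a.natAbs := by
  induction L generalizing off with
  | nil => simp at h₂; omega
  | cons b L ih =>
    by_cases hb : z.natAbs ≤ off + b.natAbs
    · exact ⟨[], b, L, rfl, by simpa using h₁, by simpa using hb⟩
    · obtain ⟨pre, a, suf, rfl, h⟩ := ih (off := off + b.natAbs) (by omega) (by simp at h₂; omega)
      exact ⟨b :: pre, a, suf, rfl, by simpa [Nat.add_assoc] using h⟩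

lemma eq_of_cell_eq_some {L : List ℤ} {off o : ℕ} {a : ℤ} {s : Bool} {z : ℤ}
    (hz : off < z.natAbs) (h : cell L off z = some (o, a, s)) :
    ∃ pre suf, L = pre ++ a :: suf ∧ o = off + sumAbs pre ∧ o < z.natAbs ∧
      z.natAbs ≤ o + a.natAbs ∧ s = decide (a < 0 ∧ 0 < z) := by
  induction L generalizing off with
  | nil => simp [cell] at h
  | cons b L ih =>
    rw [cell] at h
    split_ifs at h with hb
    · simp only [Option.some.injEq, Prod.mk.injEq] at h
      obtain ⟨rfl, rfl, rfl⟩ := h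
      exact ⟨[], L, rfl, by simp, hz, hb, rfl⟩
    · obtain ⟨pre, suf, rfl, rfl, h'⟩ := ih (by omega) h
      exact ⟨b :: pre, suf, rfl, by simp; omega, h'⟩

end Blocks

section SignedComposition

variable {n : ℕ} (A : SC n) {pre suf : List ℤ} {a : ℤ}

lemma sumAbs_eq : sumAbs A.1 = n := A.2.2

lemma ne_zero_of_eq_append (hA : A.1 = pre ++ a :: suf) : a ≠ 0 :=
  A.2.1 a (by simp [hA])

lemma add_natAbs_le_of_eq_append (hA : A.1 = pre ++ a :: suf) :
    sumAbs pre + a.natAbs ≤ n := by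
  have := sumAbs_eq A
  rw [hA, sumAbs_append, sumAbs_cons] at this
  omega

end SignedComposition

section BlockSubgroup

lemma IsBlockGen.apply {o : ℕ} {a : ℤ} {x : Q} (hx : IsBlockGen o a x) (z : ℤ) :
    x z = z ∨ (o < z.natAbs ∧ z.natAbs ≤ o + a.natAbs ∧ o < (x z).natAbs ∧
      (x z).natAbs ≤ o + a.natAbs ∧ (a < 0 → (0 < x z ↔ 0 < z))) := by
  rcases hx with ⟨j, hj, hja, rfl⟩ | ⟨ha, rfl⟩
  · rw [sP_eq_signedSwap, signedSwap_apply (by omega) (by omega) (by omega)]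
    split_ifs <;> omega
  · rw [tP, Equiv.swap_apply_def]
    split_ifs <;> omega

lemma IsBlockGen.odd {o : ℕ} {a : ℤ} {x : Q} (hx : IsBlockGen o a x) : Function.Odd x := by
  rcases hx with ⟨j, hj, hja, rfl⟩ | ⟨ha, rfl⟩
  · exact odd_sP (by omega)
  · exact odd_swap_neg _

lemma IsBlockGen.mem_W {o n : ℕ} {a : ℤ} {x : Q} (hx : IsBlockGen o a x)
    (ha : o + a.natAbs ≤ n) : x ∈ W n := by
  refine ⟨hx.odd, fun z hz => ?_⟩
  rw [Int.abs_eq_natAbs] at hz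
  exact (hx.apply z).resolve_right (by omega)

lemma WA_le_W {n : ℕ} (A : SC n) : WA A ≤ W n := by
  refine (Subgroup.closure_le _).2 fun x hx => ?_
  obtain ⟨pre, a, suf, hA, hx⟩ := mem_genList_iff.1 hx
  exact hx.mem_W (by simpa using add_natAbs_le_of_eq_append A hA)

instance {n : ℕ} (A : SC n) : Finite (WA A) :=
  Finite.of_injective _ (Subgroup.inclusion_injective (WA_le_W A))

def cellStab (L : List ℤ) : Subgroup Q where
  carrier := {w | ∀ z, cell L 0 (w z) = cell L 0 z}
  one_mem' _ := rfl
  mul_mem' hx hy z := (hx _).trans (hy z)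
  inv_mem' {x} hx z := by
    simpa only [Equiv.Perm.coe_inv, Equiv.apply_symm_apply] using (hx (x⁻¹ z)).symm

lemma WA_le_cellStab {n : ℕ} (A : SC n) : WA A ≤ cellStab A.1 := by
  refine (Subgroup.closure_le _).2 fun x hx z => ?_
  obtain ⟨pre, a, suf, hA, hx⟩ := mem_genList_iff.1 hx
  rcases hx.apply z with h | ⟨h₁, h₂, h₃, h₄, hsign⟩
  · rw [h]
  · rw [cell_of_mem_block hA (by omega) (by omega), cell_of_mem_block hA (by omega) (by omega)]
    simp only [Option.some.injEq, Prod.mk.injEq, true_and, decide_eq_decide]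
    exact and_congr_right hsign

end BlockSubgroup

section Reflections

variable {H : Subgroup Q} {o k : ℕ}

lemma signedSwap_succ_mem (h : ∀ j : ℕ, o < j → j < o + k → sP j ∈ H) {q : ℤ}
    (hq : o < q) (hqk : q < o + k) : signedSwap q (q + 1) ∈ H := by
  have := h q.toNat (by omega) (by omega)
  rwa [sP_eq_signedSwap, Int.toNat_of_nonneg (by omega)] at this

lemma signedSwap_mem_of_adjacent (h : ∀ j : ℕ, o < j → j < o + k → sP j ∈ H) {p q : ℤ}
    (hp : o < p) (hpq : p < q) (hq : q ≤ o + k) : signedSwap p q ∈ H := by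
  induction q, hpq using Int.leInduction with
  | base => exact signedSwap_succ_mem h hp (by omega)
  | succ q hpq ih =>
    have hs := signedSwap_succ_mem h (q := q) (by omega) (by omega)
    have hconj :=
      conj_signedSwap (odd_signedSwap (u := q) (v := q + 1) (by omega) (by omega) (by omega)) p q
    have hp' : signedSwap q (q + 1) p = p := by
      rw [signedSwap_apply (by omega) (by omega) (by omega)]; split_ifs <;> omega
    have hq' : signedSwap q (q + 1) q = q + 1 := by
      rw [signedSwap_apply (by omega) (by omega) (by omega)]; split_ifs <;> omega
    rw [hp', hq'] at hconj
    rw [← hconj]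
    exact mul_mem (mul_mem hs (ih (by omega))) (inv_mem hs)

lemma swap_neg_mem_of_adjacent (h : ∀ j : ℕ, o < j → j < o + k → sP j ∈ H)
    (ht : tP (o + 1) ∈ H) {p : ℤ} (hp : o < p) (hpk : p ≤ o + k) : Equiv.swap p (-p) ∈ H := by
  induction p, (show (o : ℤ) + 1 ≤ p by omega) using Int.leInduction with
  | base => exact_mod_cast ht
  | succ p hop ih =>
    have hs := signedSwap_succ_mem h (q := p) (by omega) (by omega)
    have hconj :=
      conj_swap_neg (odd_signedSwap (u := p) (v := p + 1) (by omega) (by omega) (by omega)) p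
    have hp' : signedSwap p (p + 1) p = p + 1 := by
      rw [signedSwap_apply (by omega) (by omega) (by omega)]; split_ifs <;> omega
    rw [hp'] at hconj
    rw [← hconj]
    exact mul_mem (mul_mem hs (ih (by omega) (by omega))) (inv_mem hs)

end Reflections

section CellReflections

variable {n : ℕ} {A : SC n} {pre suf : List ℤ} {a : ℤ}

lemma sP_mem_WA (hA : A.1 = pre ++ a :: suf) :
    ∀ j : ℕ, sumAbs pre < j → j < sumAbs pre + a.natAbs → sP j ∈ WA A := fun j h₁ h₂ =>
  Subgroup.subset_closure <| mem_genList_iff.2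
    ⟨pre, a, suf, hA, Or.inl ⟨j - sumAbs pre, by omega, by omega, by congr 1; omega⟩⟩

lemma tP_mem_WA (hA : A.1 = pre ++ a :: suf) (ha : 0 < a) : tP (sumAbs pre + 1) ∈ WA A :=
  Subgroup.subset_closure <| mem_genList_iff.2 ⟨pre, a, suf, hA, Or.inr ⟨ha, by simp⟩⟩

lemma swap_neg_mem_WA_of_block (hA : A.1 = pre ++ a :: suf) (ha : 0 < a) {u : ℤ}
    (h₁ : sumAbs pre < u.natAbs) (h₂ : u.natAbs ≤ sumAbs pre + a.natAbs) :
    Equiv.swap u (-u) ∈ WA A := by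
  have key := swap_neg_mem_of_adjacent (sP_mem_WA hA) (tP_mem_WA hA ha) (p := u.natAbs)
    (by omega) (by omega)
  rcases le_or_gt 0 u with hu | hu
  · rwa [Int.natAbs_of_nonneg hu] at key
  · rwa [Int.ofNat_natAbs_of_nonpos hu.le, Equiv.swap_comm, neg_neg] at key

lemma signedSwap_mem_WA_of_block (hA : A.1 = pre ++ a :: suf) {u v : ℤ} (hu : u ≠ 0)
    (hv : v ≠ 0) (huv : u.natAbs ≠ v.natAbs) (hu₁ : sumAbs pre < u.natAbs)
    (hu₂ : u.natAbs ≤ sumAbs pre + a.natAbs) (hv₁ : sumAbs pre < v.natAbs)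
    (hv₂ : v.natAbs ≤ sumAbs pre + a.natAbs) (hsign : a < 0 → (0 < u ↔ 0 < v)) :
    signedSwap u v ∈ WA A := by
  have ha := ne_zero_of_eq_append A hA
  have hpos : ∀ p q : ℤ, 0 < p → 0 < q → p.natAbs ≠ q.natAbs → sumAbs pre < p.natAbs →
      p.natAbs ≤ sumAbs pre + a.natAbs → sumAbs pre < q.natAbs →
      q.natAbs ≤ sumAbs pre + a.natAbs → signedSwap p q ∈ WA A := by
    intro p q hp hq hpq hp₁ hp₂ hq₁ hq₂
    rcases lt_or_gt_of_ne (show p ≠ q by omega) with h | h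
    · exact signedSwap_mem_of_adjacent (sP_mem_WA hA) (by omega) h (by omega)
    · rw [signedSwap_comm]
      exact signedSwap_mem_of_adjacent (sP_mem_WA hA) (by omega) h (by omega)
  have hmixed : ∀ p q : ℤ, 0 < p → q < 0 → p.natAbs ≠ q.natAbs → sumAbs pre < p.natAbs →
      p.natAbs ≤ sumAbs pre + a.natAbs → sumAbs pre < q.natAbs →
      q.natAbs ≤ sumAbs pre + a.natAbs → 0 < a → signedSwap p q ∈ WA A := by
    intro p q hp hq hpq hp₁ hp₂ hq₁ hq₂ ha
    have ht := swap_neg_mem_WA_of_block hA ha (u := q) hq₁ hq₂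
    have hconj := conj_signedSwap (odd_swap_neg q) p (-q)
    rw [Equiv.swap_apply_of_ne_of_ne (by omega) (by omega), Equiv.swap_apply_right] at hconj
    rw [← hconj]
    exact mul_mem (mul_mem ht (hpos p (-q) hp (by omega) (by omega) hp₁ hp₂ (by omega)
      (by omega))) (inv_mem ht)
  rcases lt_or_gt_of_ne hu with hu' | hu' <;> rcases lt_or_gt_of_ne hv with hv' | hv'
  · rw [← signedSwap_neg_neg hu hv huv]
    exact hpos (-u) (-v) (by omega) (by omega) (by omega) (by omega) (by omega) (by omega)
      (by omega)
  · rw [signedSwap_comm]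
    exact hmixed v u hv' hu' (by omega) hv₁ hv₂ hu₁ hu₂ (by have := hsign; omega)
  · exact hmixed u v hu' hv' huv hu₁ hu₂ hv₁ hv₂ (by have := hsign; omega)
  · exact hpos u v hu' hv' huv hu₁ hu₂ hv₁ hv₂

lemma signedSwap_mem_WA {u v : ℤ} (hu : u ≠ 0) (hv : v ≠ 0) (huv : u.natAbs ≠ v.natAbs)
    (hun : u.natAbs ≤ n) (h : cell A.1 0 u = cell A.1 0 v) : signedSwap u v ∈ WA A := by
  obtain ⟨pre, a, suf, hA, h₁, h₂⟩ :=
    exists_mem_block (L := A.1) (off := 0) (z := u) (by omega) (by rw [sumAbs_eq]; omega)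
  rw [zero_add] at h₁ h₂
  rw [cell_of_mem_block hA (by omega) (by omega)] at h
  obtain ⟨-, -, -, -, hv₁, hv₂, hs⟩ := eq_of_cell_eq_some (by omega) h.symm
  rw [decide_eq_decide] at hs
  exact signedSwap_mem_WA_of_block hA hu hv huv h₁ h₂ (by omega) (by omega)
    fun ha => by simpa [ha] using hs

lemma swap_neg_mem_WA {u : ℤ} (hu : u ≠ 0) (hun : u.natAbs ≤ n)
    (h : cell A.1 0 (-u) = cell A.1 0 u) : Equiv.swap u (-u) ∈ WA A := by
  obtain ⟨pre, a, suf, hA, h₁, h₂⟩ :=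
    exists_mem_block (L := A.1) (off := 0) (z := u) (by omega) (by rw [sumAbs_eq]; omega)
  rw [zero_add] at h₁ h₂
  rw [cell_of_mem_block hA (by simpa using h₁) (by simpa using h₂),
    cell_of_mem_block hA (by omega) (by omega)] at h
  simp only [Option.some.injEq, Prod.mk.injEq, true_and, decide_eq_decide] at h
  have ha : 0 < a := by
    rcases lt_or_gt_of_ne (ne_zero_of_eq_append A hA) with ha | ha
    · simp only [ha, true_and] at h; omega
    · exact ha
  exact swap_neg_mem_WA_of_block hA ha h₁ h₂

end CellReflections

section CoxeterElement

lemma list_prod_apply_eq_self {P : List Q} {z : ℤ} (h : ∀ x ∈ P, x z = z) : P.prod z = z := by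
  induction P with
  | nil => rfl
  | cons x P ih =>
    rw [List.prod_cons, Equiv.Perm.mul_apply, ih fun y hy => h y (List.mem_cons_of_mem x hy),
      h x List.mem_cons_self]

lemma odd_list_prod {P : List Q} (h : ∀ x ∈ P, Function.Odd x) : Function.Odd P.prod := by
  induction P with
  | nil => intro z; rfl
  | cons x P ih =>
    intro z
    rw [List.prod_cons, Equiv.Perm.mul_apply, Equiv.Perm.mul_apply,
      ih (fun y hy => h y (List.mem_cons_of_mem x hy)), h x List.mem_cons_self]

def cycleSP (o k : ℕ) : Q := ((List.range k).map fun p => sP (o + p + 1)).prod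

lemma cycleSP_succ (o k : ℕ) : cycleSP o (k + 1) = cycleSP o k * sP (o + k + 1) := by
  simp [cycleSP, List.range_succ]

lemma cycleSP_apply_eq_self (o : ℕ) {k : ℕ} {z : ℤ} (hz : z.natAbs ≤ o ∨ o + k + 1 < z.natAbs) :
    cycleSP o k z = z := by
  refine list_prod_apply_eq_self fun x hx => ?_
  obtain ⟨p, hp, rfl⟩ := List.mem_map.1 hx
  rw [List.mem_range] at hp
  rw [sP_eq_signedSwap, signedSwap_apply (by omega) (by omega) (by omega)]
  split_ifs <;> omega

lemma cycleSP_apply_mid (o : ℕ) {k j : ℕ} (hj : 1 ≤ j) (hjk : j ≤ k) :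
    cycleSP o k (o + j) = o + j + 1 := by
  induction k with
  | zero => omega
  | succ k ih =>
    rw [cycleSP_succ, Equiv.Perm.mul_apply, sP_eq_signedSwap,
      signedSwap_apply (by omega) (by omega) (by omega)]
    push_cast
    by_cases hjk' : j ≤ k
    · rw [if_neg (by omega), if_neg (by omega), if_neg (by omega), if_neg (by omega), ih hjk']
    · rw [if_pos (by omega), cycleSP_apply_eq_self o (by omega)]
      omega

lemma cycleSP_apply_top (o k : ℕ) : cycleSP o k (o + k + 1) = o + 1 := by
  induction k with
  | zero => simp [cycleSP]
  | succ k ih =>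
    rw [cycleSP_succ, Equiv.Perm.mul_apply, sP_eq_signedSwap,
      signedSwap_apply (by omega) (by omega) (by omega)]
    push_cast
    rw [if_neg (by omega), if_pos (by omega), ih]

def blockCox (o : ℕ) (a : ℤ) : Q := (genList o [a]).prod

lemma blockCox_eq (o : ℕ) (a : ℤ) :
    blockCox o a = cycleSP o (a.natAbs - 1) * if 0 < a then tP (o + 1) else 1 := by
  rw [blockCox, genList, genList, List.append_nil, List.prod_append, cycleSP]
  split_ifs <;> simp

lemma odd_blockCox (o : ℕ) (a : ℤ) : Function.Odd (blockCox o a) :=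
  odd_list_prod fun _ hx => (mem_genList_singleton.1 hx).odd

lemma blockCox_apply_eq_self {o : ℕ} {a : ℤ} {z : ℤ}
    (hz : z.natAbs ≤ o ∨ o + a.natAbs < z.natAbs) : blockCox o a z = z :=
  list_prod_apply_eq_self fun _ hx =>
    ((mem_genList_singleton.1 hx).apply z).resolve_right (by omega)

lemma blockCox_apply_mem {o : ℕ} {a : ℤ} {z : ℤ} (h₁ : o < z.natAbs)
    (h₂ : z.natAbs ≤ o + a.natAbs) :
    o < (blockCox o a z).natAbs ∧ (blockCox o a z).natAbs ≤ o + a.natAbs := by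
  by_contra h
  have := (blockCox o a).injective (blockCox_apply_eq_self (z := blockCox o a z) (by omega))
  omega

lemma genList_prod_apply_of_mem_block {L pre suf : List ℤ} {a : ℤ} (hL : L = pre ++ a :: suf)
    {z : ℤ} (h₁ : sumAbs pre < z.natAbs) (h₂ : z.natAbs ≤ sumAbs pre + a.natAbs) :
    (genList 0 L).prod z = blockCox (sumAbs pre) a z := by
  have hsplit : genList 0 L = genList 0 pre ++ (genList (sumAbs pre) [a] ++
      genList (sumAbs pre + a.natAbs) suf) := by
    rw [hL, genList_append, ← List.singleton_append, genList_append]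
    simp
  have hsuf : (genList (sumAbs pre + a.natAbs) suf).prod z = z := by
    refine list_prod_apply_eq_self fun x hx => ?_
    obtain ⟨pre', b, suf', -, hx⟩ := mem_genList_iff.1 hx
    exact (hx.apply z).resolve_right (by omega)
  have hpre : (genList 0 pre).prod (blockCox (sumAbs pre) a z) = blockCox (sumAbs pre) a z := by
    refine list_prod_apply_eq_self fun x hx => ?_
    obtain ⟨pre', b, suf', hpre', hx⟩ := mem_genList_iff.1 hx
    have := blockCox_apply_mem h₁ h₂
    have hsum : sumAbs pre' + b.natAbs ≤ sumAbs pre := by simp [hpre']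
    exact (hx.apply _).resolve_right (by omega)
  rw [hsplit, List.prod_append, List.prod_append, Equiv.Perm.mul_apply, Equiv.Perm.mul_apply,
    hsuf, ← blockCox, hpre]

end CoxeterElement

section BlockCoxInvariant

variable {o : ℕ} {a : ℤ}

lemma blockCox_apply_succ {j : ℕ} (hj : 1 ≤ j) (hja : j < a.natAbs) (hpos : 0 < a → 2 ≤ j) :
    blockCox o a (o + j) = o + j + 1 := by
  have hmid := cycleSP_apply_mid o (k := a.natAbs - 1) hj (by omega)
  rw [blockCox_eq]
  split_ifs with ha
  · rw [Equiv.Perm.mul_apply, tP, Equiv.swap_apply_of_ne_of_ne (by omega) (by omega), hmid]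
  · rw [mul_one, hmid]

lemma blockCox_apply_top (ha : 2 ≤ a) : blockCox o a (o + a.natAbs) = o + 1 := by
  have htop := cycleSP_apply_top o (a.natAbs - 1)
  rw [show ((a.natAbs - 1 : ℕ) : ℤ) = a.natAbs - 1 by omega, add_sub_assoc', sub_add_cancel]
    at htop
  rw [blockCox_eq, if_pos (by omega), Equiv.Perm.mul_apply, tP,
    Equiv.swap_apply_of_ne_of_ne (by omega) (by omega), htop]

lemma blockCox_apply_one (ha : 0 < a) :
    blockCox o a (o + 1) = -cycleSP o (a.natAbs - 1) (o + 1) := by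
  have hodd : Function.Odd (cycleSP o (a.natAbs - 1)) := odd_list_prod fun x hx => by
    obtain ⟨p, -, rfl⟩ := List.mem_map.1 hx
    exact odd_sP (by omega)
  rw [blockCox_eq, if_pos ha, Equiv.Perm.mul_apply, tP, Nat.cast_add, Nat.cast_one,
    Equiv.swap_apply_left, hodd]

variable {β : Type*} {f : ℤ → β}

lemma eq_one_of_blockCox_invariant
    (hf : ∀ z, o < z.natAbs → z.natAbs ≤ o + a.natAbs → f (blockCox o a z) = f z)
    (ha : 0 < a) {j : ℕ} (hj : 1 ≤ j) (hja : j ≤ a.natAbs) : f (o + j) = f (o + 1) := by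
  obtain rfl | hj := eq_or_lt_of_le hj
  · rfl
  have hdown : ∀ d j : ℕ, j + d = a.natAbs → 2 ≤ j → f (o + j) = f (o + a.natAbs) := by
    intro d
    induction d with
    | zero => intro j hj _; rw [← hj, Nat.add_zero]
    | succ d ih =>
      intro j hjd hj
      have := hf (o + j) (by omega) (by omega)
      rw [blockCox_apply_succ (by omega) (by omega) fun _ => hj] at this
      rw [← ih (j + 1) (by omega) (by omega), ← this, Nat.cast_add, Nat.cast_one, add_assoc]
  rw [hdown _ j (Nat.add_sub_cancel' hja) hj, ← blockCox_apply_top (o := o) (a := a) (by omega),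
    hf _ (by omega) (by omega)]

lemma eq_succ_of_blockCox_invariant
    (hf : ∀ z, o < z.natAbs → z.natAbs ≤ o + a.natAbs → f (blockCox o a z) = f z)
    {j : ℕ} (hj : 1 ≤ j) (hja : j < a.natAbs) : f (o + j) = f (o + j + 1) := by
  by_cases ha : 0 < a
  · have := eq_one_of_blockCox_invariant hf ha (j := j + 1) (by omega) (by omega)
    rw [Nat.cast_add, Nat.cast_one, ← add_assoc] at this
    rw [this, eq_one_of_blockCox_invariant hf ha hj hja.le]
  · rw [← blockCox_apply_succ hj hja (by omega), hf _ (by omega) (by omega)]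

lemma eq_neg_of_blockCox_invariant
    (hf : ∀ z, o < z.natAbs → z.natAbs ≤ o + a.natAbs → f (blockCox o a z) = f z)
    (ha : 0 < a) : f (o + 1) = f (-(o + 1)) := by
  have hg : ∀ z, o < z.natAbs → z.natAbs ≤ o + a.natAbs →
      f (-blockCox o a z) = f (-z) := fun z h₁ h₂ => by
    rw [← odd_blockCox, hf _ (by omega) (by omega)]
  have hB := blockCox_apply_one (o := o) ha
  obtain ha1 | ha2 := eq_or_lt_of_le (show 1 ≤ a by omega)
  · subst ha1
    rw [show (1 : ℤ).natAbs - 1 = 0 from rfl, cycleSP, List.range_zero, List.map_nil,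
      List.prod_nil, Equiv.Perm.one_apply] at hB
    rw [← hB, hf _ (by omega) (by omega)]
  · have hmid := cycleSP_apply_mid o (k := a.natAbs - 1) (j := 1) le_rfl (by omega)
    rw [Nat.cast_one] at hmid
    rw [hmid] at hB
    have := eq_one_of_blockCox_invariant (f := fun z => f (-z)) hg ha (j := 2) (by omega)
      (by omega)
    simp only [Nat.cast_ofNat] at this
    rw [← hf _ (by omega) (by omega), hB, ← this]
    ring_nf

end BlockCoxInvariant

/-- The orbits of `c_B` already join any two points that a generator of `W_B` exchanges, so
`W_A`, which contains the reflection exchanging two points of one of its cells, contains the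
conjugate of that generator. -/
theorem conj_mem_WA_of_conj_cox_mem {n : ℕ} (A B : SC n) {x : Q} (hx : x ∈ W n)
    (hc : x⁻¹ * cox B * x ∈ WA A) : ∀ y ∈ WA B, x⁻¹ * y * x ∈ WA A := by
  have hodd : Function.Odd ⇑x⁻¹ := odd_inv (odd_of_mem_W hx)
  set f : ℤ → Option (ℕ × ℤ × Bool) := fun z => cell A.1 0 (x⁻¹ z)
  have hf : ∀ z, f (cox B z) = f z := fun z => by
    simpa [f, Equiv.Perm.mul_apply] using WA_le_cellStab A hc (x⁻¹ z)
  have hgen : ∀ s ∈ genList 0 B.1, x⁻¹ * s * x ∈ WA A := by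
    intro s hs
    obtain ⟨pre, b, suf, hB, hs⟩ := mem_genList_iff.1 hs
    rw [zero_add] at hs
    have hfb : ∀ z, sumAbs pre < z.natAbs → z.natAbs ≤ sumAbs pre + b.natAbs →
        f (blockCox (sumAbs pre) b z) = f z := fun z h₁ h₂ => by
      rw [← genList_prod_apply_of_mem_block hB h₁ h₂]; exact hf z
    have hbn := add_natAbs_le_of_eq_append B hB
    have hle : ∀ z : ℤ, z.natAbs ≤ n → (x⁻¹ z).natAbs ≤ n :=
      fun z hz => natAbs_apply_le_of_mem_W (inv_mem hx) hz
    rcases hs with ⟨j, hj, hjb, rfl⟩ | ⟨hb, rfl⟩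
    · have hconj := conj_signedSwap hodd (sumAbs pre + j : ℕ) ((sumAbs pre + j : ℕ) + 1)
      rw [inv_inv] at hconj
      rw [sP_eq_signedSwap, hconj]
      refine signedSwap_mem_WA (odd_apply_ne_zero hodd (by omega))
        (odd_apply_ne_zero hodd (by omega)) ?_ (hle _ (by omega)) ?_
      · rw [Ne, odd_natAbs_apply_eq_iff hodd]; omega
      · have := eq_succ_of_blockCox_invariant hfb hj hjb
        simpa only [f, Nat.cast_add] using this
    · have hconj := conj_swap_neg hodd (sumAbs pre + 1 : ℕ)
      rw [inv_inv] at hconj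
      rw [tP, hconj]
      refine swap_neg_mem_WA (odd_apply_ne_zero hodd (by omega)) (hle _ (by omega)) ?_
      have := eq_neg_of_blockCox_invariant hfb hb
      simpa only [f, Nat.cast_add, Nat.cast_one, hodd _] using this.symm
  have hle : WA B ≤ (WA A).comap (MulAut.conj x⁻¹).toMonoidHom :=
    (Subgroup.closure_le _).2 fun s hs => by simpa using hgen s hs
  exact fun y hy => by simpa using hle hy

section OrbitCount

noncomputable def signedPoints (n : ℕ) : Finset ℤ := (Finset.Icc (-(n : ℤ)) n).erase 0

lemma mem_signedPoints {n : ℕ} {z : ℤ} : z ∈ signedPoints n ↔ z ≠ 0 ∧ z.natAbs ≤ n := by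
  simp only [signedPoints, mem_erase, mem_Icc]
  omega

lemma card_filter_signedPoints_comp {n : ℕ} {x : Q} (hx : x ∈ W n) (P : ℤ → Prop)
    [DecidablePred P] :
    #{z ∈ signedPoints n | P (x z)} = #{z ∈ signedPoints n | P z} := by
  have hx' := odd_of_mem_W hx
  have hxi := odd_of_mem_W (inv_mem hx)
  refine card_nbij' (⇑x) (⇑x⁻¹) (fun z hz => ?_) (fun z hz => ?_) (fun z _ => ?_) (fun z _ => ?_)
  · simp only [coe_filter, Set.mem_ofPred_eq, mem_signedPoints] at hz ⊢
    exact ⟨⟨odd_apply_ne_zero hx' hz.1.1, natAbs_apply_le_of_mem_W hx hz.1.2⟩, hz.2⟩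
  · simp only [coe_filter, Set.mem_ofPred_eq, mem_signedPoints] at hz ⊢
    refine ⟨⟨odd_apply_ne_zero hxi hz.1.1, natAbs_apply_le_of_mem_W (inv_mem hx) hz.1.2⟩, ?_⟩
    simpa using hz.2
  · simp
  · simp

lemma card_filter_signedPoints {n : ℕ} (P : ℤ → Prop) [DecidablePred P]
    (hP : ∀ z, P (-z) ↔ P z) :
    #{z ∈ signedPoints n | P z} = 2 * #{z ∈ Ioc 0 (n : ℤ) | P z} := by
  set T := (Ioc 0 (n : ℤ)).filter P
  have hdisj : Disjoint T (T.map (Equiv.neg ℤ).toEmbedding) := by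
    simp only [T, disjoint_left, mem_map, mem_filter, mem_Ioc, Equiv.coe_toEmbedding,
      Equiv.neg_apply]
    rintro z ⟨⟨hz, -⟩, -⟩ ⟨y, ⟨⟨hy, -⟩, -⟩, rfl⟩
    omega
  have : (signedPoints n).filter P = T.disjUnion _ hdisj := by
    ext z
    simp only [T, mem_filter, mem_signedPoints, mem_disjUnion, mem_map, mem_Ioc,
      Equiv.coe_toEmbedding, Equiv.neg_apply]
    constructor
    · rintro ⟨⟨hz, hzn⟩, hP'⟩
      rcases lt_or_gt_of_ne hz with h | h
      · exact Or.inr ⟨-z, ⟨⟨by omega, by omega⟩, by rwa [hP]⟩, neg_neg z⟩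
      · exact Or.inl ⟨⟨h, by omega⟩, hP'⟩
    · rintro (⟨⟨h₁, h₂⟩, hP'⟩ | ⟨y, ⟨⟨h₁, h₂⟩, hP'⟩, rfl⟩)
      · exact ⟨⟨by omega, by omega⟩, hP'⟩
      · exact ⟨⟨by omega, by omega⟩, by rwa [hP]⟩
  rw [this, card_disjUnion, card_map, two_mul]

/-- Twice the signed size of the block of `z` with respect to `H`: up to sign, the number of
`y ∈ ±[n]` with `y` or `-y` in the `H`-orbit of `z`; the sign records whether `-z` lies in
that orbit. For `H = W_A` it is `2a`, where `a` is the part of `A` whose block contains `|z|`. -/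
noncomputable def blockType (n : ℕ) (H : Subgroup Q) (z : ℤ) : ℤ :=
  (if ∃ h ∈ H, h z = -z then 1 else -1) *
    #{y ∈ signedPoints n | ∃ h ∈ H, h z = y ∨ h z = -y}

variable {n : ℕ} {H K : Subgroup Q} {x : Q}

lemma exists_conj_iff (hHK : ∀ g, g ∈ H ↔ x⁻¹ * g * x ∈ K) (P : ℤ → Prop) (z : ℤ) :
    (∃ k ∈ K, P (k (x⁻¹ z))) ↔ ∃ h ∈ H, P (x⁻¹ (h z)) := by
  constructor
  · rintro ⟨k, hk, hP⟩
    refine ⟨x * k * x⁻¹, (hHK _).2 (by simpa [mul_assoc] using hk), ?_⟩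
    simpa [Equiv.Perm.mul_apply] using hP
  · rintro ⟨h, hh, hP⟩
    exact ⟨x⁻¹ * h * x, (hHK h).1 hh, by simpa [Equiv.Perm.mul_apply] using hP⟩

lemma blockType_conj (hx : x ∈ W n) (hHK : ∀ g, g ∈ H ↔ x⁻¹ * g * x ∈ K) (z : ℤ) :
    blockType n K (x⁻¹ z) = blockType n H z := by
  have hodd := odd_of_mem_W (inv_mem hx)
  have hneg : (∃ k ∈ K, k (x⁻¹ z) = -x⁻¹ z) ↔ ∃ h ∈ H, h z = -z := by
    rw [exists_conj_iff hHK (· = -x⁻¹ z)]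
    simp only [(hodd z).symm, x⁻¹.injective.eq_iff]
  have hlink : #{y ∈ signedPoints n | ∃ k ∈ K, k (x⁻¹ z) = y ∨ k (x⁻¹ z) = -y} =
      #{y ∈ signedPoints n | ∃ h ∈ H, h z = y ∨ h z = -y} := by
    rw [← card_filter_signedPoints_comp (inv_mem hx)]
    congr 1
    refine filter_congr fun y _ => ?_
    rw [exists_conj_iff hHK (fun w => w = x⁻¹ y ∨ w = -x⁻¹ y)]
    simp only [(hodd y).symm, x⁻¹.injective.eq_iff]
  rw [blockType, blockType, hlink]
  simp only [hneg]

lemma card_blockType_conj (hx : x ∈ W n) (hHK : ∀ g, g ∈ H ↔ x⁻¹ * g * x ∈ K) (t : ℤ) :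
    #{z ∈ signedPoints n | blockType n K z = t} = #{z ∈ signedPoints n | blockType n H z = t} := by
  rw [← card_filter_signedPoints_comp (inv_mem hx) (blockType n K · = t)]
  simp only [blockType_conj hx hHK]

end OrbitCount

section BlockCount

lemma exists_cell_neg_iff (L : List ℤ) (off : ℕ) (z b : ℤ) :
    (∃ o s, cell L off (-z) = some (o, b, s)) ↔ ∃ o s, cell L off z = some (o, b, s) := by
  induction L generalizing off with
  | nil => simp [cell]
  | cons a L ih =>
    simp only [cell, Int.natAbs_neg]
    split_ifs
    · simp
    · exact ih _

lemma card_filter_cell_eq_some (b : ℤ) (L : List ℤ) (off : ℕ) :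
    #{z ∈ Ioc (off : ℤ) ((off + sumAbs L : ℕ) : ℤ) | ∃ o s, cell L off z = some (o, b, s)} =
      b.natAbs * L.count b := by
  induction L generalizing off with
  | nil => simp
  | cons a L ih =>
    have hsplit : Ioc (off : ℤ) ((off + sumAbs (a :: L) : ℕ) : ℤ) =
        Ioc (off : ℤ) ((off + a.natAbs : ℕ) : ℤ) ∪
          Ioc ((off + a.natAbs : ℕ) : ℤ) ((off + a.natAbs + sumAbs L : ℕ) : ℤ) := by
      rw [Ioc_union_Ioc_eq_Ioc (by omega) (by omega), sumAbs_cons, Nat.add_assoc]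
    have hdisj : Disjoint (Ioc (off : ℤ) ((off + a.natAbs : ℕ) : ℤ))
        (Ioc ((off + a.natAbs : ℕ) : ℤ) ((off + a.natAbs + sumAbs L : ℕ) : ℤ)) := by
      rw [disjoint_left]; intro z h₁ h₂; simp only [mem_Ioc] at h₁ h₂; omega
    have hfirst : #{z ∈ Ioc (off : ℤ) ((off + a.natAbs : ℕ) : ℤ) |
        ∃ o s, cell (a :: L) off z = some (o, b, s)} = if a = b then b.natAbs else 0 := by
      have : ∀ z ∈ Ioc (off : ℤ) ((off + a.natAbs : ℕ) : ℤ),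
          (∃ o s, cell (a :: L) off z = some (o, b, s)) ↔ a = b := by
        intro z hz
        rw [mem_Ioc] at hz
        rw [cell, if_pos (by omega)]
        simp
      rw [filter_congr this]
      split_ifs with hab
      · rw [filter_true_of_mem fun _ _ => hab, Int.card_Ioc, ← hab]; omega
      · rw [filter_false_of_mem fun _ _ => hab, card_empty]
    have hrest : ∀ z ∈ Ioc ((off + a.natAbs : ℕ) : ℤ) ((off + a.natAbs + sumAbs L : ℕ) : ℤ),
        (∃ o s, cell (a :: L) off z = some (o, b, s)) ↔
          ∃ o s, cell L (off + a.natAbs) z = some (o, b, s) := by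
      intro z hz
      rw [mem_Ioc] at hz
      rw [cell, if_neg (by omega)]
    rw [hsplit, filter_union, card_union_of_disjoint (disjoint_filter_filter hdisj), hfirst,
      filter_congr hrest, ih, List.count_cons]
    by_cases hab : a = b <;> simp [hab, mul_add, add_comm]

end BlockCount

section BlockTypeWA

variable {n : ℕ} (A : SC n)

lemma blockType_WA {pre suf : List ℤ} {a : ℤ} (hA : A.1 = pre ++ a :: suf) {z : ℤ}
    (h₁ : sumAbs pre < z.natAbs) (h₂ : z.natAbs ≤ sumAbs pre + a.natAbs) :
    blockType n (WA A) z = 2 * a := by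
  have ha := ne_zero_of_eq_append A hA
  have han := add_natAbs_le_of_eq_append A hA
  have hcell : ∀ y, sumAbs pre < y.natAbs → y.natAbs ≤ sumAbs pre + a.natAbs →
      cell A.1 0 y = some (sumAbs pre, a, decide (a < 0 ∧ 0 < y)) := fun y h₁ h₂ => by
    simpa using cell_of_mem_block (off := 0) hA (by simpa using h₁) (by simpa using h₂)
  have hlink : ∀ y ∈ signedPoints n, (∃ h ∈ WA A, h z = y ∨ h z = -y) ↔
      sumAbs pre < y.natAbs ∧ y.natAbs ≤ sumAbs pre + a.natAbs := by
    intro y hy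
    rw [mem_signedPoints] at hy
    constructor
    · rintro ⟨h, hh, hhz⟩
      have := WA_le_cellStab A hh z
      rw [hcell _ h₁ h₂] at this
      obtain ⟨-, -, -, -, hb₁, hb₂, -⟩ := eq_of_cell_eq_some (by omega) this
      omega
    · intro hy'
      by_cases hyz : y.natAbs = z.natAbs
      · exact ⟨1, one_mem _, by simp only [Equiv.Perm.one_apply]; omega⟩
      by_cases hsign : 0 < z ↔ 0 < y
      · exact ⟨_, signedSwap_mem_WA_of_block hA (by omega) hy.1 (Ne.symm hyz) h₁ h₂ hy'.1 hy'.2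
          fun _ => hsign, Or.inl (by rw [signedSwap_apply (by omega) hy.1 (Ne.symm hyz)]; simp)⟩
      · refine ⟨_, signedSwap_mem_WA_of_block hA (v := -y) (by omega) (by omega) (by omega) h₁
          h₂ (by omega) (by omega) fun _ => by omega, Or.inr ?_⟩
        rw [signedSwap_apply (by omega) (by omega) (by omega)]
        simp
  have hcard : #{y ∈ signedPoints n | ∃ h ∈ WA A, h z = y ∨ h z = -y} = 2 * a.natAbs := by
    rw [filter_congr hlink,
      card_filter_signedPoints _ (by simp only [Int.natAbs_neg, implies_true])]
    have : (Ioc 0 (n : ℤ)).filter (fun y => sumAbs pre < y.natAbs ∧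
        y.natAbs ≤ sumAbs pre + a.natAbs) = Ioc (sumAbs pre : ℤ) (sumAbs pre + a.natAbs) := by
      ext y; simp only [mem_filter, mem_Ioc]; omega
    rw [this, Int.card_Ioc]
    omega
  have hneg : (∃ h ∈ WA A, h z = -z) ↔ 0 < a := by
    constructor
    · rintro ⟨h, hh, hhz⟩
      have := WA_le_cellStab A hh z
      rw [hhz, hcell _ (by omega) (by omega), hcell _ h₁ h₂] at this
      simp only [Option.some.injEq, Prod.mk.injEq, true_and, decide_eq_decide] at this
      omega
    · exact fun ha => ⟨_, swap_neg_mem_WA_of_block hA ha h₁ h₂, Equiv.swap_apply_left _ _⟩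
  rw [blockType, hcard, Nat.cast_mul, Nat.cast_ofNat, Int.natCast_natAbs]
  rcases lt_or_gt_of_ne ha with ha' | ha'
  · rw [if_neg (mt hneg.1 (not_lt.2 ha'.le)), abs_of_neg ha']
    ring
  · rw [if_pos (hneg.2 ha'), abs_of_pos ha']
    ring

lemma card_blockType_WA (b : ℤ) :
    #{z ∈ signedPoints n | blockType n (WA A) z = 2 * b} = 2 * (b.natAbs * A.1.count b) := by
  have hiff : ∀ z ∈ signedPoints n, blockType n (WA A) z = 2 * b ↔
      ∃ o s, cell A.1 0 z = some (o, b, s) := by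
    intro z hz
    rw [mem_signedPoints] at hz
    obtain ⟨pre, a, suf, hA, h₁, h₂⟩ :=
      exists_mem_block (L := A.1) (off := 0) (z := z) (by omega) (by rw [sumAbs_eq]; omega)
    rw [cell_of_mem_block hA h₁ h₂, zero_add] at *
    rw [blockType_WA A hA h₁ h₂]
    simp
  rw [filter_congr hiff, card_filter_signedPoints _ fun z => exists_cell_neg_iff _ _ _ _]
  have := card_filter_cell_eq_some b A.1 0
  rw [zero_add, sumAbs_eq, Nat.cast_zero] at this
  rw [this]

end BlockTypeWA

section DoublePartitions

variable {n : ℕ}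

lemma DP.ext {l m : DP n} (h₁ : l.2.1.parts = m.2.1.parts) (h₂ : l.2.2.parts = m.2.2.parts) :
    l = m := by
  obtain ⟨⟨k, hk⟩, p, q⟩ := l
  obtain ⟨⟨k', hk'⟩, p', q'⟩ := m
  obtain rfl : k = k' := by
    have e := p.parts_sum
    have e' := p'.parts_sum
    simp only at h₁
    rw [h₁, e'] at e
    exact e.symm
  obtain rfl := Nat.Partition.ext h₁
  obtain rfl := Nat.Partition.ext h₂
  rfl

lemma lamOf_congr {A B : SC n} (h : A.1.Perm B.1) : lamOf A = lamOf B :=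
  DP.ext (Multiset.coe_eq_coe.2 ((h.filter _).map _)) (Multiset.coe_eq_coe.2 ((h.filter _).map _))

lemma map_natAbs_filter_pos (P N : List ℕ) (hP : ∀ c ∈ P, 0 < c) :
    ((P.map (fun a : ℕ => (a : ℤ)) ++ N.map (fun a : ℕ => -(a : ℤ))).filter
      (fun a => 0 < a)).map Int.natAbs = P := by
  rw [List.filter_append, List.filter_map, List.filter_map,
    List.filter_eq_self.2 (fun c hc => by simpa using hP c hc),
    List.filter_eq_nil_iff.2 (fun c _ => by simp)]
  simp [Function.comp_def]

lemma map_natAbs_filter_neg (P N : List ℕ) (hN : ∀ c ∈ N, 0 < c) :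
    ((P.map (fun a : ℕ => (a : ℤ)) ++ N.map (fun a : ℕ => -(a : ℤ))).filter
      (fun a => a < 0)).map Int.natAbs = N := by
  rw [List.filter_append, List.filter_map, List.filter_map,
    List.filter_eq_nil_iff.2 (fun c _ => by simp),
    List.filter_eq_self.2 (fun c hc => by simpa using hN c hc)]
  simp [Function.comp_def]

lemma lamOf_hat (l : DP n) : lamOf (hat l) = l := by
  obtain ⟨k, p, q⟩ := l
  refine DP.ext ?_ ?_
  · show ((((p.parts.toList.map (fun a : ℕ => (a : ℤ)) ++
        q.parts.toList.map (fun a : ℕ => -(a : ℤ))).filter (fun a => 0 < a)).map Int.natAbs :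
          List ℕ) : Multiset ℕ) = p.parts
    rw [map_natAbs_filter_pos _ _ fun c hc => p.parts_pos (Multiset.mem_toList.1 hc),
      Multiset.coe_toList]
  · show ((((p.parts.toList.map (fun a : ℕ => (a : ℤ)) ++
        q.parts.toList.map (fun a : ℕ => -(a : ℤ))).filter (fun a => a < 0)).map Int.natAbs :
          List ℕ) : Multiset ℕ) = q.parts
    rw [map_natAbs_filter_neg _ _ fun c hc => q.parts_pos (Multiset.mem_toList.1 hc),
      Multiset.coe_toList]

end DoublePartitions

section Main

def ConjLe (n : ℕ) (mu lam : DP n) : Prop :=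
  ∃ g ∈ W n, ∀ x ∈ WA (hat mu), g⁻¹ * x * g ∈ WA (hat lam)

variable {n : ℕ}

/-- Mutual containment up to conjugacy makes `W_{λ̂}` and `W_{μ̂}` conjugate, hence equinumerous
in points of each block type, and these numbers recover the parts of `λ̂` and `μ̂`. -/
lemma eq_of_conjLe_of_conjLe {lam mu : DP n} (h₁ : ConjLe n mu lam) (h₂ : ConjLe n lam mu) :
    lam = mu := by
  obtain ⟨x, hx, hxc⟩ := h₁
  obtain ⟨y, -, hyc⟩ := h₂
  have hcorr := Subgroup.mem_iff_conj_mem_of_conj_le hxc hyc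
  have hcount : ∀ b : ℤ, (hat lam).1.count b = (hat mu).1.count b := by
    intro b
    by_cases hb : b = 0
    · subst hb
      rw [List.count_eq_zero_of_not_mem fun h => (hat lam).2.1 0 h rfl,
        List.count_eq_zero_of_not_mem fun h => (hat mu).2.1 0 h rfl]
    · have := card_blockType_conj hx hcorr (2 * b)
      rw [card_blockType_WA, card_blockType_WA] at this
      exact Nat.eq_of_mul_eq_mul_left (Int.natAbs_pos.2 hb)
        (Nat.eq_of_mul_eq_mul_left two_pos this)
  rw [← lamOf_hat lam, ← lamOf_hat mu, lamOf_congr (List.perm_iff_count.2 hcount)]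

instance (n : ℕ) : IsPartialOrder (DP n) (ConjLe n) where
  refl _ := ⟨1, one_mem _, fun x hx => by simpa using hx⟩
  trans _ _ _ := by
    rintro ⟨g, hg, hgc⟩ ⟨h, hh, hhc⟩
    refine ⟨g * h, mul_mem hg hh, fun z hz => ?_⟩
    simpa [mul_assoc] using hhc _ (hgc z hz)
  antisymm _ _ h₁ h₂ := eq_of_conjLe_of_conjLe h₂ h₁

lemma phi_pos_iff {A : SC n} {w : Q} : 0 < phi n A w ↔ ∃ x ∈ W n, x⁻¹ * w * x ∈ WA A := by
  rw [phi, Nat.cast_pos, Nat.card_pos_iff, and_iff_left Subtype.finite]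
  constructor
  · rintro ⟨q, x, -, hx⟩
    exact ⟨x, x.2, hx⟩
  · rintro ⟨x, hx, hw⟩
    exact ⟨⟨_, ⟨x, hx⟩, rfl, hw⟩⟩

lemma cox_mem_WA (A : SC n) : cox A ∈ WA A :=
  (WA A).list_prod_mem fun _ hx => Subgroup.subset_closure hx

lemma phiMat_diag_pos (lam : DP n) : 0 < phiMat n lam lam :=
  phi_pos_iff.2 ⟨1, one_mem _, by simpa using cox_mem_WA (hat lam)⟩

lemma conjLe_of_phiMat_ne_zero {lam mu : DP n} (h : phiMat n lam mu ≠ 0) : ConjLe n mu lam := by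
  obtain ⟨x, hx, hc⟩ := phi_pos_iff.1 (lt_of_le_of_ne (Nat.cast_nonneg _) (Ne.symm h))
  exact ⟨x, hx, conj_mem_WA_of_conj_cox_mem _ _ hx hc⟩

end Main

theorem statement_0_general (n : ℕ) :
    IsUnit (phiMat n) ∧
    (∀ lam : DP n, 0 < phiMat n lam lam) ∧
    (∀ lam mu : DP n,
      (¬ ∃ g ∈ W n, ∀ x ∈ WA (hat mu), g⁻¹ * x * g ∈ WA (hat lam)) →
        phiMat n lam mu = 0) := by
  refine ⟨?_, phiMat_diag_pos, fun lam mu h => ?_⟩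
  · exact Matrix.isUnit_of_isPartialOrder (phiMat n) (ConjLe n)
      (fun _ _ => conjLe_of_phiMat_ne_zero) fun lam => (phiMat_diag_pos lam).ne'.isUnit
  · by_contra hne
    exact h (conjLe_of_phiMat_ne_zero hne)

/-- For every `n ≥ 1` the matrix `(φ_λ(c_μ))_{λ,μ ∈ DP(n)}` over `ℚ` is
invertible, `φ_λ(c_λ) > 0` for every `λ`, and `φ_λ(c_μ) = 0` unless `W_{μ̂}` is
contained in some `Wₙ`-conjugate of `W_{λ̂}`. -/
theorem statement_0 (n : ℕ) (hn : 1 ≤ n) :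
    IsUnit (phiMat n) ∧
    (∀ lam : DP n, 0 < phiMat n lam lam) ∧
    (∀ lam mu : DP n,
      (¬ ∃ g ∈ W n, ∀ x ∈ WA (hat mu), g⁻¹ * x * g ∈ WA (hat lam)) →
        phiMat n lam mu = 0) :=
  statement_0_general n

end GBA
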